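/- Let Z, W, A, U be discrete random variables on a common probability space with all relevant conditioning events of positive probability. If W is conditionally independent of (A, Z) given U, then E[ 1/P(A = a | U) | W, A = a ] = 1/P(A = a | W). -/

import Mathlib

noncomputable section

/-- Probability of an event under a pmf `p` on a finite outcome space. -/
def Pr {Ω : Type*} [Fintype Ω] (p : Ω → ℝ) (E : Set Ω) : ℝ :=
  ∑ ω : Ω, E.indicator p ω

/-- Conditional probability `P(E | F)`. -/
def condPr {Ω : Type*} [Fintype Ω] (p : Ω → ℝ) (E F : Set Ω) : ℝ :=
  Pr p (E ∩ F) / Pr p F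

/-- Conditional expectation `E[g | F]` of a real function `g` given an event `F`. -/
def condExp' {Ω : Type*} [Fintype Ω] (p : Ω → ℝ) (g : Ω → ℝ) (F : Set Ω) : ℝ :=
  (∑ ω : Ω, F.indicator (fun ω' => p ω' * g ω') ω) / Pr p F

/-!
Split the numerator of the conditional expectation along the values `u` of `U`: the
`u`-slice contributes `P(W = w, A = a, U = u) / P(A = a | U = u)`. Summing the proxy
condition over `z` gives `W ⊥⊥ A | U`, which turns this slice into `P(W = w, U = u)`.
Summing over `u` the numerator is `P(W = w)`, and dividing by `P(W = w, A = a)` gives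
`1 / P(A = a | W = w)`.
-/

open Finset

section Pr

variable {Ω : Type*} [Fintype Ω] (p : Ω → ℝ)

lemma Pr_nonneg (hp0 : ∀ ω, 0 ≤ p ω) (E : Set Ω) : 0 ≤ Pr p E :=
  sum_nonneg fun ω _ => Set.indicator_nonneg (fun ω _ => hp0 ω) ω

lemma Pr_mono (hp0 : ∀ ω, 0 ≤ p ω) {E F : Set Ω} (h : E ⊆ F) : Pr p E ≤ Pr p F :=
  sum_le_sum fun ω _ => Set.indicator_le_indicator_of_subset h hp0 ω

lemma Pr_eq_zero_of_subset (hp0 : ∀ ω, 0 ≤ p ω) {E F : Set Ω} (h : E ⊆ F)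
    (hF : Pr p F = 0) : Pr p E = 0 :=
  le_antisymm (hF ▸ Pr_mono p hp0 h) (Pr_nonneg p hp0 E)

lemma sum_indicator_eq_sum_fiberwise {β : Type*} [DecidableEq β] (f : Ω → ℝ) (E : Set Ω)
    (V : Ω → β) :
    ∑ ω, E.indicator f ω = ∑ v ∈ univ.image V, ∑ ω, (E ∩ {ω | V ω = v}).indicator f ω := by
  rw [← sum_fiberwise_of_maps_to (t := univ.image V) fun ω _ => mem_image_of_mem V (mem_univ ω)]
  refine sum_congr rfl fun v _ => ?_
  rw [sum_filter]
  refine sum_congr rfl fun ω _ => ?_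
  by_cases hv : V ω = v
  · rw [if_pos hv, ← hv, Set.inter_comm, ← Set.indicator_indicator,
      Set.indicator_of_mem (show ω ∈ {ω' | V ω' = V ω} from rfl)]
  · simp [hv]

lemma Pr_eq_sum_Pr_inter {β : Type*} [DecidableEq β] (E : Set Ω) (V : Ω → β) :
    Pr p E = ∑ v ∈ univ.image V, Pr p (E ∩ {ω | V ω = v}) :=
  sum_indicator_eq_sum_fiberwise p E V

lemma sum_indicator_mul_eq_Pr_mul {g : Ω → ℝ} {E : Set Ω} {c : ℝ} (hg : ∀ ω ∈ E, g ω = c) :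
    ∑ ω, E.indicator (fun ω => p ω * g ω) ω = Pr p E * c := by
  rw [Pr, sum_mul]
  refine sum_congr rfl fun ω _ => ?_
  by_cases hω : ω ∈ E
  · simp [hω, hg ω hω]
  · simp [hω]

lemma Pr_inter_div_condPr_of_indep (hp0 : ∀ ω, 0 ≤ p ω) {E F G : Set Ω}
    (hindep : Pr p (E ∩ F ∩ G) * Pr p G = Pr p (E ∩ G) * Pr p (F ∩ G))
    (hF : Pr p G ≠ 0 → condPr p F G ≠ 0) :
    Pr p (E ∩ F ∩ G) / condPr p F G = Pr p (E ∩ G) := by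
  by_cases hG : Pr p G = 0
  · -- `x / 0 = 0` makes both `condPr p F G` and the left side vanish
    rw [condPr, hG, div_zero, div_zero]
    exact (Pr_eq_zero_of_subset p hp0 Set.inter_subset_right hG).symm
  · have hFG : Pr p (F ∩ G) ≠ 0 := (div_ne_zero_iff.mp (hF hG)).1
    rw [condPr, div_div_eq_mul_div, hindep, mul_div_assoc, div_self hFG, mul_one]

end Pr

section Proxy

variable {Ω 𝓐 𝓦 𝓩 𝓤 : Type*} [Fintype Ω] (p : Ω → ℝ)
  (A : Ω → 𝓐) (W : Ω → 𝓦) (Z : Ω → 𝓩) (U : Ω → 𝓤)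

/-- `W ⊥⊥ (A, Z) | U`, as a factorization of the joint pmf. -/
def ProxyCondition : Prop :=
  ∀ (w : 𝓦) (a' : 𝓐) (z : 𝓩) (u : 𝓤),
    Pr p {ω | W ω = w ∧ A ω = a' ∧ Z ω = z ∧ U ω = u} * Pr p {ω | U ω = u}
      = Pr p {ω | W ω = w ∧ U ω = u} * Pr p {ω | A ω = a' ∧ Z ω = z ∧ U ω = u}

variable {p A W Z U}

lemma ProxyCondition.Pr_mul_Pr_eq (hCI : ProxyCondition p A W Z U)
    (w : 𝓦) (a : 𝓐) (u : 𝓤) :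
    Pr p ({ω | W ω = w} ∩ {ω | A ω = a} ∩ {ω | U ω = u}) * Pr p {ω | U ω = u}
      = Pr p ({ω | W ω = w} ∩ {ω | U ω = u}) * Pr p ({ω | A ω = a} ∩ {ω | U ω = u}) := by
  classical
  rw [Pr_eq_sum_Pr_inter p ({ω | W ω = w} ∩ {ω | A ω = a} ∩ {ω | U ω = u}) Z,
    Pr_eq_sum_Pr_inter p ({ω | A ω = a} ∩ {ω | U ω = u}) Z, sum_mul, mul_sum]
  refine sum_congr rfl fun z _ => ?_
  convert hCI w a z u using 3 <;> ext ω <;>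
    simp only [Set.mem_inter_iff, Set.mem_ofPred_eq] <;> tauto

lemma sum_indicator_div_propensity_eq_Pr (hp0 : ∀ ω, 0 ≤ p ω) (a : 𝓐)
    (hCI : ProxyCondition p A W Z U)
    (hposU : ∀ u : 𝓤, Pr p {ω | U ω = u} ≠ 0 →
      0 < condPr p {ω | A ω = a} {ω | U ω = u}) (w : 𝓦) :
    ∑ ω, {ω | W ω = w ∧ A ω = a}.indicator
        (fun ω => p ω * (1 / condPr p {ω' | A ω' = a} {ω' | U ω' = U ω})) ω
      = Pr p {ω | W ω = w} := by
  classical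
  rw [sum_indicator_eq_sum_fiberwise _ _ U, Pr_eq_sum_Pr_inter p _ U]
  refine sum_congr rfl fun u _ => ?_
  rw [sum_indicator_mul_eq_Pr_mul p (c := 1 / condPr p {ω | A ω = a} {ω | U ω = u})
    fun ω hω => by rw [hω.2], mul_one_div]
  exact Pr_inter_div_condPr_of_indep p hp0 (hCI.Pr_mul_Pr_eq w a u)
    fun hu => (hposU u hu).ne'

end Proxy

theorem inverse_propensity_bridge_general {Ω 𝓐 𝓦 𝓩 𝓤 : Type*} [Fintype Ω]
    (p : Ω → ℝ) (hp0 : ∀ ω, 0 ≤ p ω)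
    (A : Ω → 𝓐) (W : Ω → 𝓦) (Z : Ω → 𝓩) (U : Ω → 𝓤) (a : 𝓐)
    (hCI : ∀ (w : 𝓦) (a' : 𝓐) (z : 𝓩) (u : 𝓤),
      Pr p {ω | W ω = w ∧ A ω = a' ∧ Z ω = z ∧ U ω = u} * Pr p {ω | U ω = u}
        = Pr p {ω | W ω = w ∧ U ω = u} * Pr p {ω | A ω = a' ∧ Z ω = z ∧ U ω = u})
    (hposU : ∀ u : 𝓤, Pr p {ω | U ω = u} ≠ 0 →
      0 < condPr p {ω | A ω = a} {ω | U ω = u}) :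
    ∀ w : 𝓦, 0 < Pr p {ω | W ω = w ∧ A ω = a} →
      condExp' p (fun ω => 1 / condPr p {ω' | A ω' = a} {ω' | U ω' = U ω})
          {ω | W ω = w ∧ A ω = a}
        = 1 / condPr p {ω | A ω = a} {ω | W ω = w} := by
  intro w _
  rw [condExp', sum_indicator_div_propensity_eq_Pr hp0 a hCI hposU w, condPr,
    one_div_div, Set.inter_comm]
  rfl

/-- If `W ⊥⊥ (A, Z) | U` (the proxy condition, stated via factorization of joint pmfs),
then `E[ 1 / P(A = a | U) | W = w, A = a ] = 1 / P(A = a | W = w)`. -/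
theorem inverse_propensity_bridge {Ω 𝓐 𝓦 𝓩 𝓤 : Type*} [Fintype Ω]
    (p : Ω → ℝ) (hp0 : ∀ ω, 0 ≤ p ω) (hp1 : ∑ ω : Ω, p ω = 1)
    (A : Ω → 𝓐) (W : Ω → 𝓦) (Z : Ω → 𝓩) (U : Ω → 𝓤) (a : 𝓐)
    (hCI : ∀ (w : 𝓦) (a' : 𝓐) (z : 𝓩) (u : 𝓤),
      Pr p {ω | W ω = w ∧ A ω = a' ∧ Z ω = z ∧ U ω = u} * Pr p {ω | U ω = u}
        = Pr p {ω | W ω = w ∧ U ω = u} * Pr p {ω | A ω = a' ∧ Z ω = z ∧ U ω = u})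
    (hposU : ∀ u : 𝓤, Pr p {ω | U ω = u} ≠ 0 →
      0 < condPr p {ω | A ω = a} {ω | U ω = u}) :
    ∀ w : 𝓦, 0 < Pr p {ω | W ω = w ∧ A ω = a} →
      condExp' p (fun ω => 1 / condPr p {ω' | A ω' = a} {ω' | U ω' = U ω})
          {ω | W ω = w ∧ A ω = a}
        = 1 / condPr p {ω | A ω = a} {ω | W ω = w} :=
  inverse_propensity_bridge_general p hp0 A W Z U a hCI hposU

end
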